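/- arXiv:1901.02480 — 2 statements merged into one kernel-verified Lean document; each statement's English description precedes it below -/
import Mathlib

section
/- If α > α_s := 1/(4|v_min|(1+v_min)), then there exists a stage k such that X(v*,k) < 0. -/
/-!
Along `v*` the account obeys, from stage 1 on, the linear recurrence
`X(k+2) = X(k+1) - c X(k)` with `c = α (1 + v_min) |v_min| > 1/4`, whose characteristic roots are
non-real, so its solutions oscillate. Concretely, if `X` stayed positive, the ratios
`y k = X(k+1) / X(k)` would satisfy `y (k+1) = 1 - c / y k`; since
`y - (1 - c / y) ≥ c - 1/4` on `(0, 1]`, they would decrease by a fixed amount at each step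
and eventually become negative.
-/

/-- Account value `X(v,k)` for feedback gain `α`, initial value `X0`, path `v`. -/
noncomputable def accountX (α X0 : ℝ) (v : ℕ → ℝ) : ℕ → ℝ
  | 0 => X0
  | 1 => X0
  | (k + 2) => accountX α X0 v (k + 1) + α * (1 + v k) * v (k + 1) * accountX α X0 v k

/-- The distinguished path: `v*(0) = v_max` and `v*(k) = v_min` for `k ≥ 1`. -/
noncomputable def vstar (vmin vmax : ℝ) : ℕ → ℝ := fun k => if k = 0 then vmax else vmin

lemma one_sub_div_le_sub {c y : ℝ} (hc : 1 / 4 ≤ c) (hy : 0 < y) (hy1 : y ≤ 1) :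
    1 - c / y ≤ y - (c - 1 / 4) := by
  have key :
      y * (y - (c - 1 / 4)) - y * (1 - c / y) = (y - 1 / 2) ^ 2 + (c - 1 / 4) * (1 - y) := by
    field_simp
    ring
  have : 0 ≤ y * (y - (c - 1 / 4) - (1 - c / y)) := by
    rw [mul_sub, key]
    have := mul_nonneg (sub_nonneg.2 hc) (sub_nonneg.2 hy1)
    positivity
  linarith [(mul_nonneg_iff_of_pos_left hy).1 this]

lemma not_forall_pos_of_eq_one_sub_div {c : ℝ} {y : ℕ → ℝ} (hc : 1 / 4 < c)
    (hy : ∀ n, y (n + 1) = 1 - c / y n) : ¬ ∀ n, 0 < y n := by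
  intro hpos
  set δ := c - 1 / 4
  have hδ : 0 < δ := sub_pos.2 hc
  have hle_one : ∀ n, y (n + 1) ≤ 1 := fun n => by
    rw [hy n]
    linarith [div_pos (by linarith : 0 < c) (hpos n)]
  have hdecay : ∀ n : ℕ, y (n + 1) ≤ 1 - n * δ := by
    intro n
    induction n with
    | zero => simpa using hle_one 0
    | succ n ih =>
      calc y (n + 2) = 1 - c / y (n + 1) := hy (n + 1)
        _ ≤ y (n + 1) - δ := one_sub_div_le_sub hc.le (hpos _) (hle_one n)
        _ ≤ 1 - (n + 1 : ℕ) * δ := by push_cast; linarith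
  obtain ⟨n, hn⟩ := exists_nat_gt (1 / δ)
  have : 1 < n * δ := by rwa [div_lt_iff₀ hδ] at hn
  linarith [hdecay n, hpos (n + 1)]

section Recurrence

variable {c : ℝ} {x : ℕ → ℝ}

lemma forall_pos_of_forall_nonneg_of_eq_sub_mul (hc : 0 < c)
    (hx : ∀ n, x (n + 2) = x (n + 1) - c * x n) (h0 : 0 < x 0) (hnonneg : ∀ n, 0 ≤ x n) :
    ∀ n, 0 < x n := by
  intro n
  induction n with
  | zero => exact h0
  | succ n ih =>
    refine (hnonneg (n + 1)).lt_of_ne fun hzero => ?_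
    have := hnonneg (n + 2)
    rw [hx n, ← hzero] at this
    nlinarith

theorem exists_neg_of_eq_sub_mul (hc : 1 / 4 < c)
    (hx : ∀ n, x (n + 2) = x (n + 1) - c * x n) (h0 : 0 < x 0) : ∃ n, x n < 0 := by
  by_contra! hnonneg
  have hpos := forall_pos_of_forall_nonneg_of_eq_sub_mul (by linarith) hx h0 hnonneg
  refine not_forall_pos_of_eq_one_sub_div (y := fun n => x (n + 1) / x n) hc (fun n => ?_)
    (fun n => div_pos (hpos _) (hpos _))
  have := (hpos n).ne'
  have := (hpos (n + 1)).ne'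
  field_simp
  rw [hx n]

end Recurrence

lemma accountX_vstar_add_three (α X0 vmin vmax : ℝ) (n : ℕ) :
    accountX α X0 (vstar vmin vmax) (n + 3) =
      accountX α X0 (vstar vmin vmax) (n + 2) -
        α * (1 + vmin) * -vmin * accountX α X0 (vstar vmin vmax) (n + 1) := by
  simp only [accountX, vstar, Nat.add_one_ne_zero, if_false]
  ring

theorem distinguished_path_negative_oscillatory_general (vmin vmax α X0 : ℝ)
    (h1 : -1 < vmin) (h2 : vmin < 0) (hX0 : 0 < X0)
    (hα : α > 1 / (4 * |vmin| * (1 + vmin))) :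
    ∃ k, accountX α X0 (vstar vmin vmax) k < 0 := by
  have hc : 1 / 4 < α * (1 + vmin) * -vmin := by
    rw [abs_of_neg h2, gt_iff_lt, div_lt_iff₀ (by nlinarith)] at hα
    linarith
  obtain ⟨n, hn⟩ :=
    exists_neg_of_eq_sub_mul (x := fun n => accountX α X0 (vstar vmin vmax) (n + 1)) hc
      (accountX_vstar_add_three α X0 vmin vmax) hX0
  exact ⟨n + 1, hn⟩

/-- Lemma 2(a): if `α > α_s = 1/(4|v_min|(1+v_min))`, then `X(v*,k)` is negative
for some stage `k`. -/
theorem distinguished_path_negative_oscillatory (vmin vmax α X0 : ℝ)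
    (h1 : -1 < vmin) (h2 : vmin < 0) (h3 : 0 < vmax) (hX0 : 0 < X0)
    (hα : α > 1 / (4 * |vmin| * (1 + vmin))) :
    ∃ k, accountX α X0 (vstar vmin vmax) k < 0 :=
  distinguished_path_negative_oscillatory_general vmin vmax α X0 h1 h2 hX0 hα
end

section
/- Let α ≥ 0. Then X(v,2) > 0 for all admissible paths v if and only if α < 1/(|v_min|(1+v_max)). -/
/-!
`X(v,2) = X₀ (1 + α (1 + v 0) v 1)`, and on the box `[v_min, v_max]²` the factor
`(1 + v 0) v 1` is smallest at `v 0 = v_max`, `v 1 = v_min`: the largest nonnegative weight on the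
most negative return. So positivity along every path amounts to
`0 < 1 + α (1 + v_max) v_min = 1 - α |v_min| (1 + v_max)`.
-/

lemma accountX_two (α X0 : ℝ) (v : ℕ → ℝ) :
    accountX α X0 v 2 = X0 * (1 + α * (1 + v 0) * v 1) := by
  simp only [accountX]
  ring

lemma one_add_max_mul_min_le_one_add_mul {vmin vmax a b : ℝ} (hmin : vmin ≤ 0)
    (ha : 0 ≤ 1 + a) (ha' : a ≤ vmax) (hb : vmin ≤ b) :
    (1 + vmax) * vmin ≤ (1 + a) * b :=
  calc (1 + vmax) * vmin ≤ (1 + a) * vmin := mul_le_mul_of_nonpos_right (by linarith) hmin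
    _ ≤ (1 + a) * b := mul_le_mul_of_nonneg_left hb ha

lemma forall_accountX_two_pos_iff {vmin vmax α X0 : ℝ} (hmin : -1 ≤ vmin)
    (hneg : vmin ≤ 0) (hle : vmin ≤ vmax) (hX0 : 0 < X0) (hα0 : 0 ≤ α) :
    (∀ v : ℕ → ℝ, (∀ k, vmin ≤ v k ∧ v k ≤ vmax) → 0 < accountX α X0 v 2) ↔
      0 < 1 + α * (1 + vmax) * vmin := by
  simp only [accountX_two, mul_pos_iff_of_pos_left hX0]
  constructor
  · intro h
    simpa using h (fun k => if k = 0 then vmax else vmin) fun k => by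
      split_ifs <;> constructor <;> linarith
  · intro h v hv
    have hworst := one_add_max_mul_min_le_one_add_mul hneg (by linarith [(hv 0).1]) (hv 0).2
      (hv 1).1
    calc 0 < 1 + α * (1 + vmax) * vmin := h
      _ ≤ 1 + α * (1 + v 0) * v 1 := by
        simpa only [mul_assoc, add_le_add_iff_left] using mul_le_mul_of_nonneg_left hworst hα0

lemma lt_one_div_abs_mul_iff {vmin vmax α : ℝ} (hmin : vmin < 0) (hmax : 0 < 1 + vmax) :
    α < 1 / (|vmin| * (1 + vmax)) ↔ 0 < 1 + α * (1 + vmax) * vmin := by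
  rw [lt_div_iff₀ (mul_pos (abs_pos.mpr hmin.ne) hmax), abs_of_neg hmin]
  constructor <;> intro h <;> linarith

/-- For `α ≥ 0`: `X(v,2) > 0` for all admissible paths `v` if and only if
`α < 1/(|v_min|(1+v_max))`. -/
theorem positivity_at_two_iff (vmin vmax α X0 : ℝ)
    (h1 : -1 < vmin) (h2 : vmin < 0) (h3 : 0 < vmax) (hX0 : 0 < X0)
    (hα0 : 0 ≤ α) :
    (∀ v : ℕ → ℝ, (∀ k, vmin ≤ v k ∧ v k ≤ vmax) → 0 < accountX α X0 v 2) ↔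
      α < 1 / (|vmin| * (1 + vmax)) := by
  rw [forall_accountX_two_pos_iff h1.le h2.le (by linarith) hX0 hα0,
    lt_one_div_abs_mul_iff h2 (by linarith)]
end
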